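/- For every ν > 0, the first positive zero j_{ν,1} of the Bessel function J_ν satisfies √((ν+1)(ν+5)) < j_{ν,1} < √(2(ν+1)(ν+3)). -/

import Mathlib

open MeasureTheory Real Set

noncomputable section

/-- Bessel function of the first kind of order `ν`. -/
def besselJ (ν : ℝ) (x : ℝ) : ℝ :=
  ∑' m : ℕ, ((-1 : ℝ) ^ m / (m.factorial * Real.Gamma (m + ν + 1))) *
    (x / 2) ^ (2 * (m : ℝ) + ν)

/-- The first positive zero `j_{ν,1}` of the Bessel function `J_ν`. -/
def besselZero (ν : ℝ) : ℝ := sInf {x : ℝ | 0 < x ∧ besselJ ν x = 0}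

/-- A Dirichlet test function for the domain `Ω`. -/
def IsDirichletTest {n : ℕ} (Ω : Set (EuclideanSpace ℝ (Fin n)))
    (f : EuclideanSpace ℝ (Fin n) → ℝ) : Prop :=
  ContDiff ℝ (⊤ : ℕ∞) f ∧ HasCompactSupport f ∧ tsupport f ⊆ Ω

/-- The `k`-th Dirichlet eigenvalue of the Laplacian on `Ω` (counted with
multiplicity), defined via the min-max principle. -/
def dirichletEig (n : ℕ) (k : ℕ) (Ω : Set (EuclideanSpace ℝ (Fin n))) : ℝ :=
  sInf { c : ℝ | ∃ V : Submodule ℝ (EuclideanSpace ℝ (Fin n) → ℝ),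
    Module.finrank ℝ V = k ∧ (∀ f ∈ V, IsDirichletTest Ω f) ∧
    ∀ f ∈ V, (∫ x, ‖fderiv ℝ f x‖ ^ 2) ≤ c * ∫ x, (f x) ^ 2 }

/-- The inradius of a set. -/
def inradius {n : ℕ} (Ω : Set (EuclideanSpace ℝ (Fin n))) : ℝ :=
  sSup {r : ℝ | ∃ x, Metric.ball x r ⊆ Ω}

/-- Open axis-aligned box with half-side lengths `a i`. -/
def eucBox (n : ℕ) (a : Fin n → ℝ) : Set (EuclideanSpace ℝ (Fin n)) :=
  {x | ∀ i, |x i| < a i}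

namespace Stmt16Aux

open Topology Filter

/-- coefficients of the reduced Bessel power series -/
def bc (ν : ℝ) (m : ℕ) : ℝ := (-1 : ℝ) ^ m / (m.factorial * Real.Gamma (m + ν + 1))

def G (ν u : ℝ) : ℝ := ∑' m : ℕ, bc ν m * u ^ m
def G1 (ν u : ℝ) : ℝ := ∑' m : ℕ, bc ν (m + 1) * ((m : ℝ) + 1) * u ^ m
def G2 (ν u : ℝ) : ℝ := ∑' m : ℕ, bc ν (m + 2) * (((m : ℝ) + 2) * ((m : ℝ) + 1)) * u ^ m

variable {ν : ℝ}

lemma gamma_pos (hν : 0 < ν) (m : ℕ) : 0 < Real.Gamma ((m : ℝ) + ν + 1) :=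
  Real.Gamma_pos_of_pos (by positivity)

lemma gamma_succ (hν : 0 < ν) (m : ℕ) :
    Real.Gamma (((m + 1 : ℕ) : ℝ) + ν + 1) = ((m:ℝ) + ν + 1) * Real.Gamma ((m:ℝ) + ν + 1) := by
  have e1 : ((m + 1 : ℕ) : ℝ) + ν + 1 = ((m:ℝ) + ν + 1) + 1 := by push_cast; ring
  rw [e1]; exact Real.Gamma_add_one (by positivity)

lemma gamma_ge (hν : 0 < ν) (m : ℕ) :
    Real.Gamma (ν + 1) * m.factorial ≤ Real.Gamma ((m : ℝ) + ν + 1) := by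
  induction m with
  | zero => simp
  | succ n ih =>
      rw [gamma_succ hν n]
      have h2 : (((n + 1 : ℕ)).factorial : ℝ) = ((n : ℝ) + 1) * n.factorial := by
        rw [Nat.factorial_succ]; push_cast; ring
      calc Real.Gamma (ν + 1) * ((n + 1 : ℕ).factorial : ℝ)
          = ((n : ℝ) + 1) * (Real.Gamma (ν + 1) * n.factorial) := by rw [h2]; ring
        _ ≤ ((n : ℝ) + 1) * Real.Gamma ((n : ℝ) + ν + 1) :=
            mul_le_mul_of_nonneg_left ih (by positivity)
        _ ≤ ((n : ℝ) + ν + 1) * Real.Gamma ((n : ℝ) + ν + 1) :=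
            mul_le_mul_of_nonneg_right (by linarith) (gamma_pos hν n).le

lemma abs_bc (hν : 0 < ν) (m : ℕ) :
    |bc ν m| = ((m.factorial : ℝ) * Real.Gamma ((m : ℝ) + ν + 1))⁻¹ := by
  have h : (0:ℝ) < (m.factorial : ℝ) * Real.Gamma ((m : ℝ) + ν + 1) := by
    have := gamma_pos hν m
    positivity
  rw [bc, abs_div, abs_pow, abs_neg, abs_one, one_pow, abs_of_pos h, one_div]

lemma bc_rec (hν : 0 < ν) (m : ℕ) :
    (((m:ℝ) + 1) * ((m:ℝ) + ν + 1)) * bc ν (m + 1) = - bc ν m := by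
  have hΓ := gamma_pos hν m
  have hfac : (m.factorial : ℝ) ≠ 0 := Nat.cast_ne_zero.mpr m.factorial_ne_zero
  rw [bc, bc, gamma_succ hν m, pow_succ, Nat.factorial_succ]
  push_cast
  field_simp

lemma abs_bc_succ_le (hν : 0 < ν) (m : ℕ) : |bc ν (m + 1)| ≤ |bc ν m| := by
  rw [abs_bc hν, abs_bc hν]
  apply inv_anti₀
  · have := gamma_pos hν m; positivity
  · rw [gamma_succ hν m, Nat.factorial_succ]
    have hΓ := gamma_pos hν m
    have hf1 : (1:ℝ) ≤ (m.factorial : ℝ) := by exact_mod_cast m.factorial_pos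
    have key : (1:ℝ) ≤ ((m:ℝ) + 1) * ((m:ℝ) + ν + 1) := by
      nlinarith [(m.cast_nonneg : (0:ℝ) ≤ m)]
    push_cast
    calc (m.factorial : ℝ) * Real.Gamma ((m:ℝ) + ν + 1)
        = 1 * ((m.factorial : ℝ) * Real.Gamma ((m:ℝ) + ν + 1)) := by ring
      _ ≤ (((m:ℝ) + 1) * ((m:ℝ) + ν + 1)) * ((m.factorial : ℝ) * Real.Gamma ((m:ℝ) + ν + 1)) := by
          apply mul_le_mul_of_nonneg_right key (by positivity)
      _ = ((m:ℝ) + 1) * (m.factorial : ℝ) * (((m:ℝ) + ν + 1) * Real.Gamma ((m:ℝ) + ν + 1)) := by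
          ring

lemma pow4_le (m : ℕ) : ((m : ℝ) + 2) ^ 4 ≤ 16 * 16 ^ m := by
  induction m with
  | zero => norm_num
  | succ n ih =>
      have h0 : ((n:ℝ) + 1) + 2 ≤ 2 * ((n:ℝ) + 2) := by linarith
      have h : (((n+1 : ℕ):ℝ) + 2) ^ 4 ≤ 16 * (((n:ℝ) + 2) ^ 4) := by
        push_cast
        calc ((n:ℝ) + 1 + 2) ^ 4 ≤ (2 * ((n:ℝ) + 2)) ^ 4 :=
              pow_le_pow_left₀ (by positivity) h0 4
          _ = 16 * ((n:ℝ) + 2) ^ 4 := by ring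
      calc (((n+1 : ℕ):ℝ) + 2) ^ 4 ≤ 16 * (((n:ℝ) + 2) ^ 4) := h
        _ ≤ 16 * (16 * 16 ^ n) := by nlinarith [ih]
        _ = 16 * 16 ^ (n + 1) := by ring

/-- master summability lemma -/
lemma summable_master (hν : 0 < ν) {S : ℝ} (hS : 0 ≤ S) :
    Summable (fun m : ℕ => |bc ν m| * ((m : ℝ) + 2) ^ 4 * S ^ m) := by
  have hΓ : 0 < Real.Gamma (ν + 1) := Real.Gamma_pos_of_pos (by linarith)
  have hb : ∀ m : ℕ, |bc ν m| * ((m : ℝ) + 2) ^ 4 * S ^ m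
      ≤ (Real.Gamma (ν + 1))⁻¹ * (16 * ((16 * S) ^ m / m.factorial)) := by
    intro m
    have hfp : (0:ℝ) < (m.factorial : ℝ) := by exact_mod_cast m.factorial_pos
    have h1 : |bc ν m| ≤ (Real.Gamma (ν + 1))⁻¹ * ((m.factorial : ℝ))⁻¹ * ((m.factorial : ℝ))⁻¹ := by
      rw [abs_bc hν]
      rw [show (Real.Gamma (ν+1))⁻¹ * ((m.factorial : ℝ))⁻¹ * ((m.factorial : ℝ))⁻¹
          = ((m.factorial : ℝ) * (Real.Gamma (ν+1) * (m.factorial : ℝ)))⁻¹ by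
        rw [mul_inv, mul_inv]; ring]
      apply inv_anti₀ (by positivity)
      exact mul_le_mul_of_nonneg_left (gamma_ge hν m) hfp.le
    have h2 := pow4_le m
    have h3 : ((m.factorial : ℝ))⁻¹ ≤ 1 := by
      rw [inv_le_one_iff₀]; right; exact_mod_cast m.factorial_pos
    calc |bc ν m| * ((m : ℝ) + 2) ^ 4 * S ^ m
        ≤ ((Real.Gamma (ν + 1))⁻¹ * ((m.factorial : ℝ))⁻¹ * ((m.factorial : ℝ))⁻¹)
          * ((m : ℝ) + 2) ^ 4 * S ^ m := by
          apply mul_le_mul_of_nonneg_right (mul_le_mul_of_nonneg_right h1 (by positivity))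
            (by positivity)
      _ ≤ ((Real.Gamma (ν + 1))⁻¹ * ((m.factorial : ℝ))⁻¹ * 1)
          * (16 * 16 ^ m) * S ^ m := by
        apply mul_le_mul_of_nonneg_right _ (by positivity)
        apply mul_le_mul _ h2 (by positivity) (by positivity)
        exact mul_le_mul_of_nonneg_left h3 (by positivity)
      _ = (Real.Gamma (ν + 1))⁻¹ * (16 * ((16 * S) ^ m / m.factorial)) := by
        rw [mul_pow]; field_simp
  exact Summable.of_nonneg_of_le (fun m => by positivity) hb
    (((Real.summable_pow_div_factorial (16 * S)).mul_left 16).mul_left (Real.Gamma (ν + 1))⁻¹)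

lemma one_le_pow4 (m : ℕ) : (1:ℝ) ≤ ((m : ℝ) + 2) ^ 4 := by
  have h2 : (1:ℝ) ≤ (m:ℝ) + 2 := by
    have := (m.cast_nonneg : (0:ℝ) ≤ m); linarith
  calc (1:ℝ) = 1 ^ 4 := by norm_num
    _ ≤ ((m:ℝ) + 2) ^ 4 := pow_le_pow_left₀ (by norm_num) h2 4

lemma sq_le_pow4 (a : ℝ) (ha : 1 ≤ a ^ 2) : a ^ 2 ≤ a ^ 4 := by
  nlinarith [mul_nonneg (by linarith : (0:ℝ) ≤ a ^ 2 - 1) (by nlinarith : (0:ℝ) ≤ a ^ 2)]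

lemma coeff0_le (k : ℕ) : ((k:ℝ) + 1) ≤ ((k:ℝ) + 2) ^ 4 := by
  have h0 : (0:ℝ) ≤ (k:ℝ) := k.cast_nonneg
  have h1 : ((k:ℝ) + 1) ≤ ((k:ℝ) + 2) ^ 2 := by nlinarith
  have h2 := sq_le_pow4 ((k:ℝ) + 2) (by nlinarith)
  linarith

lemma coeff1_le (k : ℕ) : ((k:ℝ) + 1) ≤ ((k:ℝ) + 3) ^ 4 := by
  have h0 : (0:ℝ) ≤ (k:ℝ) := k.cast_nonneg
  have h1 : ((k:ℝ) + 1) ≤ ((k:ℝ) + 3) ^ 2 := by nlinarith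
  have h2 := sq_le_pow4 ((k:ℝ) + 3) (by nlinarith)
  linarith

lemma coeff2_le (k : ℕ) : ((k:ℝ) + 2) * ((k:ℝ) + 1) ≤ ((k:ℝ) + 3) ^ 4 := by
  have h0 : (0:ℝ) ≤ (k:ℝ) := k.cast_nonneg
  have h1 : ((k:ℝ) + 2) * ((k:ℝ) + 1) ≤ ((k:ℝ) + 3) ^ 2 := by nlinarith
  have h2 := sq_le_pow4 ((k:ℝ) + 3) (by nlinarith)
  linarith

lemma summable_G (hν : 0 < ν) (u : ℝ) : Summable (fun m : ℕ => bc ν m * u ^ m) := by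
  apply Summable.of_norm_bounded (summable_master hν (abs_nonneg u))
  intro m
  rw [norm_mul, norm_pow, Real.norm_eq_abs, Real.norm_eq_abs]
  calc |bc ν m| * |u| ^ m = |bc ν m| * 1 * |u| ^ m := by ring
    _ ≤ |bc ν m| * ((m : ℝ) + 2) ^ 4 * |u| ^ m := by
        apply mul_le_mul_of_nonneg_right (mul_le_mul_of_nonneg_left (one_le_pow4 m)
          (abs_nonneg _)) (by positivity)

lemma hasDerivAt_G (hν : 0 < ν) (y : ℝ) : HasDerivAt (G ν) (G1 ν y) y := by
  set R : ℝ := |y| + 1 with hRdef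
  have hy0 : 0 ≤ |y| := abs_nonneg y
  have hR1 : 1 ≤ R := by rw [hRdef]; linarith
  have hRpos : 0 < R := by linarith
  have hRnn : (0:ℝ) ≤ R := hRpos.le
  have hmem : y ∈ Metric.ball (0:ℝ) R := by
    rw [Metric.mem_ball, Real.dist_eq, sub_zero]; linarith
  have h0mem : (0:ℝ) ∈ Metric.ball (0:ℝ) R := Metric.mem_ball_self hRpos
  have hbound : ∀ (n : ℕ) (x : ℝ), x ∈ Metric.ball (0:ℝ) R →
      ‖bc ν n * ((n:ℝ) * x ^ (n - 1))‖ ≤ |bc ν n| * ((n : ℝ) + 2) ^ 4 * R ^ n := by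
    intro n x hx
    have hxR : |x| ≤ R := by
      rw [Metric.mem_ball, Real.dist_eq, sub_zero] at hx; exact hx.le
    rw [norm_mul, norm_mul, norm_pow, Real.norm_eq_abs, Real.norm_eq_abs, Real.norm_eq_abs]
    match n with
    | 0 => simp
    | (k + 1) =>
      have e1 : (k + 1) - 1 = k := rfl
      rw [e1]
      have h1 : |x| ^ k ≤ R ^ (k + 1) := by
        calc |x| ^ k ≤ R ^ k := pow_le_pow_left₀ (abs_nonneg x) hxR k
          _ ≤ R ^ (k + 1) := pow_le_pow_right₀ hR1 (Nat.le_succ k)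
      push_cast
      rw [abs_of_nonneg (show (0:ℝ) ≤ (k:ℝ) + 1 by positivity)]
      calc |bc ν (k+1)| * (((k:ℝ) + 1) * |x| ^ k)
          ≤ |bc ν (k+1)| * (((k:ℝ) + 3) ^ 4 * R ^ (k+1)) := by
            apply mul_le_mul_of_nonneg_left _ (abs_nonneg _)
            exact mul_le_mul (coeff1_le k) h1 (by positivity) (by positivity)
        _ = |bc ν (k+1)| * ((k:ℝ) + 1 + 2) ^ 4 * R ^ (k+1) := by ring
  have key := hasDerivAt_tsum_of_isPreconnected
    (summable_master hν hRnn) Metric.isOpen_ball (convex_ball (0:ℝ) R).isPreconnected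
    (fun (n : ℕ) (x : ℝ) (_ : x ∈ Metric.ball (0:ℝ) R) =>
      (hasDerivAt_pow n x).const_mul (bc ν n))
    hbound h0mem (summable_G hν 0) hmem
  have hs : Summable (fun n : ℕ => bc ν n * ((n:ℝ) * y ^ (n - 1))) :=
    Summable.of_norm_bounded (summable_master hν hRnn) (fun n => hbound n y hmem)
  have hsum : ∑' (n : ℕ), bc ν n * ((n:ℝ) * y ^ (n - 1)) = G1 ν y := by
    rw [Summable.tsum_eq_zero_add hs]
    have e0 : bc ν 0 * ((0:ℕ) * y ^ (0 - 1)) = 0 := by norm_num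
    rw [show ((0:ℕ):ℝ) * y ^ (0 - 1) = 0 by norm_num]
    rw [G1]
    rw [mul_zero, zero_add]
    apply tsum_congr
    intro n
    rw [Nat.add_sub_cancel]
    push_cast
    ring
  rw [← hsum]
  exact key

lemma hasDerivAt_G1 (hν : 0 < ν) (y : ℝ) : HasDerivAt (G1 ν) (G2 ν y) y := by
  set R : ℝ := |y| + 1 with hRdef
  have hy0 : 0 ≤ |y| := abs_nonneg y
  have hR1 : 1 ≤ R := by rw [hRdef]; linarith
  have hRpos : 0 < R := by linarith
  have hRnn : (0:ℝ) ≤ R := hRpos.le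
  have hmem : y ∈ Metric.ball (0:ℝ) R := by
    rw [Metric.mem_ball, Real.dist_eq, sub_zero]; linarith
  have h0mem : (0:ℝ) ∈ Metric.ball (0:ℝ) R := Metric.mem_ball_self hRpos
  have hbound : ∀ (n : ℕ) (x : ℝ), x ∈ Metric.ball (0:ℝ) R →
      ‖bc ν (n+1) * ((n:ℝ)+1) * ((n:ℝ) * x ^ (n - 1))‖
        ≤ |bc ν n| * ((n : ℝ) + 2) ^ 4 * R ^ n := by
    intro n x hx
    have hxR : |x| ≤ R := by
      rw [Metric.mem_ball, Real.dist_eq, sub_zero] at hx; exact hx.le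
    rw [norm_mul, norm_mul, norm_mul, norm_pow]
    simp only [Real.norm_eq_abs]
    match n with
    | 0 => simp
    | (k + 1) =>
      have e1 : (k + 1) - 1 = k := rfl
      rw [e1]
      have h1 : |x| ^ k ≤ R ^ (k + 1) := by
        calc |x| ^ k ≤ R ^ k := pow_le_pow_left₀ (abs_nonneg x) hxR k
          _ ≤ R ^ (k + 1) := pow_le_pow_right₀ hR1 (Nat.le_succ k)
      have hbc : |bc ν (k+1+1)| ≤ |bc ν (k+1)| := abs_bc_succ_le hν (k+1)
      push_cast
      rw [abs_of_nonneg (show (0:ℝ) ≤ (k:ℝ) + 1 + 1 by positivity),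
        abs_of_nonneg (show (0:ℝ) ≤ (k:ℝ) + 1 by positivity)]
      calc |bc ν (k+1+1)| * ((k:ℝ) + 1 + 1) * (((k:ℝ) + 1) * |x| ^ k)
          = |bc ν (k+1+1)| * ((((k:ℝ) + 2) * ((k:ℝ) + 1)) * |x| ^ k) := by ring
        _ ≤ |bc ν (k+1)| * (((k:ℝ) + 3) ^ 4 * R ^ (k+1)) := by
            apply mul_le_mul hbc _ (by positivity) (abs_nonneg _)
            exact mul_le_mul (coeff2_le k) h1 (by positivity) (by positivity)
        _ = |bc ν (k+1)| * ((k:ℝ) + 1 + 2) ^ 4 * R ^ (k+1) := by ring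
  have hds : ∀ (n : ℕ) (x : ℝ), x ∈ Metric.ball (0:ℝ) R →
      HasDerivAt (fun z : ℝ => bc ν (n+1) * ((n:ℝ)+1) * z ^ n)
        (bc ν (n+1) * ((n:ℝ)+1) * ((n:ℝ) * x ^ (n - 1))) x :=
    fun n x _ => (hasDerivAt_pow n x).const_mul (bc ν (n+1) * ((n:ℝ)+1))
  have hsum0 : Summable (fun n : ℕ => bc ν (n+1) * ((n:ℝ)+1) * (0:ℝ) ^ n) := by
    apply Summable.of_norm_bounded (summable_master hν (le_refl 0))
    intro n
    rw [norm_mul, norm_mul, norm_pow]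
    simp only [Real.norm_eq_abs]
    calc |bc ν (n+1)| * |(n:ℝ)+1| * |(0:ℝ)| ^ n
        ≤ |bc ν n| * ((n:ℝ)+2)^4 * |(0:ℝ)| ^ n := by
          apply mul_le_mul_of_nonneg_right _ (by positivity)
          apply mul_le_mul (abs_bc_succ_le hν n) _ (abs_nonneg _) (abs_nonneg _)
          rw [abs_of_nonneg (show (0:ℝ) ≤ (n:ℝ) + 1 by positivity)]
          exact coeff0_le n
      _ = |bc ν n| * ((n:ℝ)+2)^4 * (0:ℝ) ^ n := by rw [abs_zero]
  have key := hasDerivAt_tsum_of_isPreconnected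
    (summable_master hν hRnn) Metric.isOpen_ball (convex_ball (0:ℝ) R).isPreconnected
    hds hbound h0mem hsum0 hmem
  have hs : Summable (fun n : ℕ => bc ν (n+1) * ((n:ℝ)+1) * ((n:ℝ) * y ^ (n - 1))) :=
    Summable.of_norm_bounded (summable_master hν hRnn) (fun n => hbound n y hmem)
  have hsum : ∑' (n : ℕ), bc ν (n+1) * ((n:ℝ)+1) * ((n:ℝ) * y ^ (n - 1)) = G2 ν y := by
    rw [Summable.tsum_eq_zero_add hs]
    simp only [Nat.cast_zero, zero_mul, mul_zero, zero_add]
    rw [G2]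
    apply tsum_congr
    intro n
    rw [Nat.add_sub_cancel]
    push_cast
    ring
  rw [← hsum]
  exact key

lemma coeffH_le (m : ℕ) : ((m:ℝ) + 1) * (m:ℝ) ≤ ((m:ℝ) + 2) ^ 4 := by
  have h0 : (0:ℝ) ≤ (m:ℝ) := m.cast_nonneg
  have h1 : ((m:ℝ) + 1) * (m:ℝ) ≤ ((m:ℝ) + 2) ^ 2 := by nlinarith
  have h2 := sq_le_pow4 ((m:ℝ) + 2) (by nlinarith)
  linarith

lemma coeffG2_le (m : ℕ) : ((m:ℝ) + 2) * ((m:ℝ) + 1) ≤ ((m:ℝ) + 2) ^ 4 := by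
  have h0 : (0:ℝ) ≤ (m:ℝ) := m.cast_nonneg
  have h1 : ((m:ℝ) + 2) * ((m:ℝ) + 1) ≤ ((m:ℝ) + 2) ^ 2 := by nlinarith
  have h2 := sq_le_pow4 ((m:ℝ) + 2) (by nlinarith)
  linarith

lemma summable_G1 (hν : 0 < ν) (u : ℝ) :
    Summable (fun m : ℕ => bc ν (m + 1) * ((m:ℝ) + 1) * u ^ m) := by
  apply Summable.of_norm_bounded (summable_master hν (abs_nonneg u))
  intro m
  rw [norm_mul, norm_mul, norm_pow]
  simp only [Real.norm_eq_abs]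
  rw [abs_of_nonneg (show (0:ℝ) ≤ (m:ℝ) + 1 by positivity)]
  apply mul_le_mul_of_nonneg_right _ (by positivity)
  exact mul_le_mul (abs_bc_succ_le hν m) (coeff0_le m) (by positivity) (abs_nonneg _)

lemma summable_H (hν : 0 < ν) (u : ℝ) :
    Summable (fun m : ℕ => bc ν (m + 1) * (((m:ℝ) + 1) * (m:ℝ)) * u ^ m) := by
  apply Summable.of_norm_bounded (summable_master hν (abs_nonneg u))
  intro m
  rw [norm_mul, norm_mul, norm_pow]
  simp only [Real.norm_eq_abs]
  rw [abs_of_nonneg (show (0:ℝ) ≤ ((m:ℝ) + 1) * (m:ℝ) by positivity)]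
  apply mul_le_mul_of_nonneg_right _ (by positivity)
  exact mul_le_mul (abs_bc_succ_le hν m) (coeffH_le m) (by positivity) (abs_nonneg _)

lemma summable_G2 (hν : 0 < ν) (u : ℝ) :
    Summable (fun m : ℕ => bc ν (m + 2) * (((m:ℝ) + 2) * ((m:ℝ) + 1)) * u ^ m) := by
  apply Summable.of_norm_bounded (summable_master hν (abs_nonneg u))
  intro m
  rw [norm_mul, norm_mul, norm_pow]
  simp only [Real.norm_eq_abs]
  rw [abs_of_nonneg (show (0:ℝ) ≤ ((m:ℝ) + 2) * ((m:ℝ) + 1) by positivity)]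
  apply mul_le_mul_of_nonneg_right _ (by positivity)
  refine mul_le_mul ?_ (coeffG2_le m) (by positivity) (abs_nonneg _)
  exact le_trans (abs_bc_succ_le hν (m+1)) (abs_bc_succ_le hν m)

lemma ode (hν : 0 < ν) (u : ℝ) :
    u * G2 ν u + (ν + 1) * G1 ν u + G ν u = 0 := by
  have SH := summable_H hν u
  have SG1 := summable_G1 hν u
  have SG := summable_G hν u
  have h1 : u * G2 ν u = ∑' m : ℕ, bc ν (m+1) * (((m:ℝ)+1) * (m:ℝ)) * u ^ m := by
    calc u * G2 ν u
        = ∑' m : ℕ, u * (bc ν (m+2) * (((m:ℝ)+2) * ((m:ℝ)+1)) * u ^ m) := by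
          rw [G2, tsum_mul_left]
      _ = ∑' m : ℕ, (fun j : ℕ => bc ν (j+1) * (((j:ℝ)+1) * (j:ℝ)) * u ^ j) (m+1) := by
          apply tsum_congr; intro m; push_cast; ring
      _ = (fun j : ℕ => bc ν (j+1) * (((j:ℝ)+1) * (j:ℝ)) * u ^ j) 0
          + ∑' m : ℕ, (fun j : ℕ => bc ν (j+1) * (((j:ℝ)+1) * (j:ℝ)) * u ^ j) (m+1) := by
          norm_num
      _ = ∑' m : ℕ, bc ν (m+1) * (((m:ℝ)+1) * (m:ℝ)) * u ^ m := (Summable.tsum_eq_zero_add SH).symm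
  have h2 : (ν+1) * G1 ν u = ∑' m : ℕ, (ν+1) * (bc ν (m+1) * ((m:ℝ)+1) * u ^ m) := by
    rw [G1, tsum_mul_left]
  rw [h1, h2, G, ← Summable.tsum_add SH (SG1.mul_left (ν+1)), ← Summable.tsum_add (SH.add (SG1.mul_left (ν+1))) SG]
  have hz : ∀ m : ℕ, bc ν (m+1) * (((m:ℝ)+1) * (m:ℝ)) * u ^ m
      + (ν+1) * (bc ν (m+1) * ((m:ℝ)+1) * u ^ m) + bc ν m * u ^ m = 0 := by
    intro m
    have hr := bc_rec hν m
    calc bc ν (m+1) * (((m:ℝ)+1) * (m:ℝ)) * u ^ m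
        + (ν+1) * (bc ν (m+1) * ((m:ℝ)+1) * u ^ m) + bc ν m * u ^ m
        = ((((m:ℝ)+1) * ((m:ℝ)+ν+1)) * bc ν (m+1) + bc ν m) * u ^ m := by ring
      _ = 0 := by rw [hr]; ring
  calc ∑' m : ℕ, (bc ν (m+1) * (((m:ℝ)+1) * (m:ℝ)) * u ^ m
        + (ν+1) * (bc ν (m+1) * ((m:ℝ)+1) * u ^ m) + bc ν m * u ^ m)
      = ∑' _ : ℕ, (0:ℝ) := tsum_congr hz
    _ = 0 := tsum_zero

lemma continuous_G (hν : 0 < ν) : Continuous (G ν) :=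
  continuous_iff_continuousAt.2 fun y => (hasDerivAt_G hν y).continuousAt

lemma continuous_G1 (hν : 0 < ν) : Continuous (G1 ν) :=
  continuous_iff_continuousAt.2 fun y => (hasDerivAt_G1 hν y).continuousAt

lemma G_zero_pos (hν : 0 < ν) : 0 < G ν 0 := by
  have hΓ : 0 < Real.Gamma (ν + 1) := Real.Gamma_pos_of_pos (by linarith)
  have h : G ν 0 = bc ν 0 := by
    rw [G]
    rw [tsum_eq_single 0 (fun m hm => ?_)]
    · norm_num
    · rcases Nat.exists_eq_succ_of_ne_zero hm with ⟨k, rfl⟩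
      simp
  rw [h, bc]
  have : ((0:ℕ):ℝ) + ν + 1 = ν + 1 := by norm_num
  rw [this]
  norm_num
  positivity

lemma besselJ_eq (hν : 0 < ν) {x : ℝ} (hx : 0 < x) :
    besselJ ν x = (x / 2) ^ ν * G ν (x ^ 2 / 4) := by
  rw [besselJ, G, ← tsum_mul_left]
  apply tsum_congr
  intro m
  have hx2 : 0 < x / 2 := by linarith
  have e : (x/2) ^ (2*(m:ℝ) + ν) = (x/2) ^ ν * (x^2/4) ^ m := by
    rw [Real.rpow_add hx2, show (2*(m:ℝ)) = ((2*m : ℕ):ℝ) by push_cast; ring,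
      Real.rpow_natCast, pow_mul, show (x/2)^2 = x^2/4 by ring]
    ring
  rw [e, bc]
  ring

/-- If `G` is nonpositive somewhere in `[0, u₀]` (with `G 0 > 0`), there is a zero in `[0, u₀]`. -/
lemma exists_zero_of_nonpos (hν : 0 < ν) {u₀ : ℝ} (h0 : 0 ≤ u₀) (h : G ν u₀ ≤ 0) :
    ∃ z ∈ Icc (0:ℝ) u₀, G ν z = 0 := by
  rcases eq_or_lt_of_le h with heq | hlt
  · exact ⟨u₀, ⟨h0, le_refl u₀⟩, heq⟩
  · have hiv := intermediate_value_Icc' h0 ((continuous_G hν).continuousOn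
      (s := Icc (0:ℝ) u₀))
    have h0mem : (0:ℝ) ∈ Icc (G ν u₀) (G ν 0) := ⟨hlt.le, (G_zero_pos hν).le⟩
    obtain ⟨z, hz, hz0⟩ := hiv h0mem
    exact ⟨z, hz, hz0⟩

/-- Positivity of `G` on the lower-bound interval `[0, (ν+1)(ν+5)/4]`. -/
lemma G_pos_lower (hν : 0 < ν) : ∀ u, 0 ≤ u → u ≤ (ν+1)*(ν+5)/4 → 0 < G ν u := by
  set a : ℝ := (ν+1)*(ν+5)/4 with ha
  set k : ℝ := 2/(ν+5) with hk
  have h5 : (0:ℝ) < ν + 5 := by linarith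
  have hkpos : 0 < k := by rw [hk]; positivity
  have hapos : 0 < a := by rw [ha]; positivity
  by_contra hcon
  push_neg at hcon
  obtain ⟨u₀, hu₀0, hu₀a, hu₀⟩ := hcon
  obtain ⟨z, hzmem, hz0⟩ := exists_zero_of_nonpos hν hu₀0 hu₀
  set Z : Set ℝ := Icc 0 a ∩ G ν ⁻¹' {0} with hZ
  have hZne : Z.Nonempty := ⟨z, ⟨⟨hzmem.1, le_trans hzmem.2 hu₀a⟩, hz0⟩⟩
  have hZclosed : IsClosed Z := isClosed_Icc.inter (isClosed_singleton.preimage (continuous_G hν))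
  have hZbdd : BddBelow Z := ⟨0, fun t ht => ht.1.1⟩
  set t1 := sInf Z with ht1def
  have ht1Z : t1 ∈ Z := hZclosed.csInf_mem hZne hZbdd
  have hGt1 : G ν t1 = 0 := ht1Z.2
  have ht1a : t1 ≤ a := ht1Z.1.2
  have ht1pos : 0 < t1 := by
    rcases eq_or_lt_of_le ht1Z.1.1 with h | h
    · exfalso; rw [← h] at hGt1; exact (G_zero_pos hν).ne' hGt1
    · exact h
  have hpos_before : ∀ s, 0 ≤ s → s < t1 → 0 < G ν s := by
    intro s hs0 hst
    by_contra hns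
    push_neg at hns
    obtain ⟨z', hz'mem, hz'0⟩ := exists_zero_of_nonpos hν hs0 hns
    have hz'Z : z' ∈ Z := ⟨⟨hz'mem.1, le_trans hz'mem.2 (le_trans hst.le ht1a)⟩, hz'0⟩
    have : t1 ≤ z' := csInf_le hZbdd hz'Z
    linarith [hz'mem.2]
  have hG1t1 : G1 ν t1 ≤ 0 := by
    have hd := hasDerivAt_G hν t1
    rw [hasDerivAt_iff_tendsto_slope] at hd
    have hle : Filter.Tendsto (slope (G ν) t1) (𝓝[<] t1) (𝓝 (G1 ν t1)) :=
      hd.mono_left (nhdsWithin_mono t1 (fun y (hy : y < t1) => ne_of_lt hy))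
    apply le_of_tendsto hle
    filter_upwards [Ioo_mem_nhdsLT ht1pos] with s hs
    have hGs : 0 < G ν s := hpos_before s hs.1.le hs.2
    have : slope (G ν) t1 s = G ν s / (s - t1) := by
      rw [slope_def_field, hGt1]; ring
    rw [this]
    exact (div_neg_of_pos_of_neg hGs (by linarith [hs.2])).le
  -- comparison function pieces
  set w : ℝ → ℝ := fun u => (a - u) * Real.exp (-k*u) with hw
  set W1 : ℝ → ℝ := fun u => (-1 - k*(a-u)) * Real.exp (-k*u) with hW1
  set W2 : ℝ → ℝ := fun u => (2*k + k^2*(a-u)) * Real.exp (-k*u) with hW2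
  set P : ℝ → ℝ := fun u => u ^ (ν+1) * (w u * G1 ν u - G ν u * W1 u) with hP
  have hexp : ∀ u : ℝ, HasDerivAt (fun v : ℝ => Real.exp (-k*v)) (-k * Real.exp (-k*u)) u := by
    intro u
    have h1 : HasDerivAt (fun v : ℝ => -k*v) (-k) u := by
      simpa using (hasDerivAt_id u).const_mul (-k)
    simpa [mul_comm] using h1.exp
  have hwd : ∀ u : ℝ, HasDerivAt w (W1 u) u := by
    intro u
    have h1 : HasDerivAt (fun v : ℝ => a - v) (-1) u := by
      simpa using (hasDerivAt_id u).const_sub a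
    have h2 := h1.mul (hexp u)
    simp only [hw, hW1]
    exact h2.congr_deriv (by ring)
  have hW1d : ∀ u : ℝ, HasDerivAt W1 (W2 u) u := by
    intro u
    have h2 : HasDerivAt (fun v : ℝ => a - v) (-1) u := by
      simpa using (hasDerivAt_id u).const_sub a
    have h3 : HasDerivAt (fun v : ℝ => (-1:ℝ) - k*(a-v)) (-(k * -1)) u :=
      (h2.const_mul k).const_sub (-1)
    have h4 := h3.mul (hexp u)
    simp only [hW1, hW2]
    exact h4.congr_deriv (by ring)
  have hPd : ∀ u, 0 < u → HasDerivAt P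
      (u ^ ν * G ν u * (k^2*(a-u)^2 * Real.exp (-k*u))) u := by
    intro u hu
    have hrpow : HasDerivAt (fun v : ℝ => v ^ (ν+1)) ((ν+1) * u ^ ν) u := by
      have := Real.hasDerivAt_rpow_const (x := u) (p := ν+1) (Or.inl (ne_of_gt hu))
      simpa [add_sub_cancel_right] using this
    have hB : HasDerivAt (fun v => w v * G1 ν v - G ν v * W1 v)
        ((W1 u * G1 ν u + w u * G2 ν u) - (G1 ν u * W1 u + G ν u * W2 u)) u :=
      ((hwd u).mul (hasDerivAt_G1 hν u)).sub ((hasDerivAt_G hν u).mul (hW1d u))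
    have hPd0 := hrpow.mul hB
    rw [hP]
    refine hPd0.congr_deriv (Eq.symm ?_)
    have hupow : u ^ (ν+1) = u ^ ν * u := by
      rw [Real.rpow_add hu, Real.rpow_one]
    have hode := ode hν u
    have key : (ν+1)*(1+k*(a-u)) - (a-u) - u*(2*k+k^2*(a-u)) = k^2*(a-u)^2 := by
      rw [hk, ha]
      field_simp
      ring
    simp only [hw, hW1, hW2]
    rw [hupow]
    linear_combination (-(u ^ ν * Real.exp (-k*u) * (a - u))) * hode
      + (-(u ^ ν * Real.exp (-k*u) * G ν u)) * key
  have hce : Continuous (fun x : ℝ => Real.exp (-k*x)) :=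
    Real.continuous_exp.comp (continuous_const.mul continuous_id)
  have hcw : Continuous w := by
    rw [hw]; exact (continuous_const.sub continuous_id).mul hce
  have hcW1 : Continuous W1 := by
    rw [hW1]
    exact (continuous_const.sub (continuous_const.mul (continuous_const.sub continuous_id))).mul hce
  have hcontP : ContinuousOn P (Icc 0 t1) := by
    rw [hP]
    apply Continuous.continuousOn
    exact (Real.continuous_rpow_const (by linarith)).mul
      ((hcw.mul (continuous_G1 hν)).sub ((continuous_G hν).mul hcW1))
  have hmono : StrictMonoOn P (Icc 0 t1) := by
    apply strictMonoOn_of_deriv_pos (convex_Icc 0 t1) hcontP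
    intro x hx
    rw [interior_Icc] at hx
    rw [(hPd x hx.1).deriv]
    have hGx : 0 < G ν x := hpos_before x hx.1.le hx.2
    have hax : x < a := lt_of_lt_of_le hx.2 ht1a
    have h1 : 0 < x ^ ν := Real.rpow_pos_of_pos hx.1 ν
    have h2 : 0 < k^2*(a-x)^2 * Real.exp (-k*x) :=
      mul_pos (mul_pos (pow_pos hkpos 2) (pow_pos (sub_pos.2 hax) 2)) (Real.exp_pos _)
    exact mul_pos (mul_pos h1 hGx) h2
  have hP0 : P 0 = 0 := by
    simp only [hP]
    rw [Real.zero_rpow (by positivity : ν + 1 ≠ 0), zero_mul]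
  have hPt1 : P t1 ≤ 0 := by
    simp only [hP, hw]
    rw [hGt1, zero_mul, sub_zero]
    have h1 : 0 ≤ (a - t1) * Real.exp (-k*t1) := by
      apply mul_nonneg (by linarith) (Real.exp_nonneg _)
    have h2 : (a - t1) * Real.exp (-k*t1) * G1 ν t1 ≤ 0 :=
      mul_nonpos_of_nonneg_of_nonpos h1 hG1t1
    exact mul_nonpos_of_nonneg_of_nonpos (Real.rpow_nonneg ht1pos.le _) h2
  have hlt := hmono (left_mem_Icc.mpr ht1pos.le) (right_mem_Icc.mpr ht1pos.le) ht1pos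
  rw [hP0] at hlt
  linarith

/-- `G` has a zero strictly inside `(0, (ν+1)(ν+3)/2)`. -/
lemma exists_zero_upper (hν : 0 < ν) :
    ∃ z, 0 < z ∧ z < (ν+1)*(ν+3)/2 ∧ G ν z = 0 := by
  set b : ℝ := (ν+1)*(ν+3)/2 with hb
  have hbpos : 0 < b := by rw [hb]; positivity
  by_contra hcon
  push_neg at hcon
  -- hcon : ∀ z, 0 < z → z < b → G ν z ≠ 0
  have hpos : ∀ s, 0 < s → s < b → 0 < G ν s := by
    intro s hs hsb
    rcases lt_trichotomy (G ν s) 0 with h | h | h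
    · exfalso
      obtain ⟨z, hzmem, hz0⟩ := exists_zero_of_nonpos hν hs.le h.le
      have hzpos : 0 < z := by
        rcases eq_or_lt_of_le hzmem.1 with h0 | h0
        · exfalso; rw [← h0] at hz0; exact (G_zero_pos hν).ne' hz0
        · exact h0
      exact hcon z hzpos (lt_of_le_of_lt hzmem.2 hsb) hz0
    · exact absurd h (hcon s hs hsb)
    · exact h
  have hGb : 0 ≤ G ν b := by
    have htd : Filter.Tendsto (G ν) (𝓝[<] b) (𝓝 (G ν b)) :=
      ((continuous_G hν).continuousAt).continuousWithinAt
    apply ge_of_tendsto htd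
    filter_upwards [Ioo_mem_nhdsLT hbpos] with s hs
    exact (hpos s hs.1 hs.2).le
  set ψ : ℝ → ℝ := fun u => (b-u)^2 + 2*(b-u) with hψ
  set Ψ1 : ℝ → ℝ := fun u => -2*(b-u) - 2 with hΨ1
  set Q : ℝ → ℝ := fun u => u ^ (ν+1) * (ψ u * G1 ν u - G ν u * Ψ1 u) with hQ
  have hψd : ∀ u : ℝ, HasDerivAt ψ (Ψ1 u) u := by
    intro u
    have h1 : HasDerivAt (fun v : ℝ => b - v) (-1) u := by
      simpa using (hasDerivAt_id u).const_sub b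
    have h2 := ((h1.pow 2).add (h1.const_mul 2))
    simp only [hψ, hΨ1]
    exact h2.congr_deriv (by ring)
  have hΨ1d : ∀ u : ℝ, HasDerivAt Ψ1 2 u := by
    intro u
    have h1 : HasDerivAt (fun v : ℝ => b - v) (-1) u := by
      simpa using (hasDerivAt_id u).const_sub b
    have h2 := (h1.const_mul (-2)).sub_const 2
    simp only [hΨ1]
    exact h2.congr_deriv (by norm_num)
  have hQd : ∀ u, 0 < u → HasDerivAt Q
      (-(u ^ ν * G ν u * (b - u - (ν+1))^2)) u := by
    intro u hu
    have hrpow : HasDerivAt (fun v : ℝ => v ^ (ν+1)) ((ν+1) * u ^ ν) u := by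
      have := Real.hasDerivAt_rpow_const (x := u) (p := ν+1) (Or.inl (ne_of_gt hu))
      simpa [add_sub_cancel_right] using this
    have hB : HasDerivAt (fun v => ψ v * G1 ν v - G ν v * Ψ1 v)
        ((Ψ1 u * G1 ν u + ψ u * G2 ν u) - (G1 ν u * Ψ1 u + G ν u * 2)) u :=
      ((hψd u).mul (hasDerivAt_G1 hν u)).sub ((hasDerivAt_G hν u).mul (hΨ1d u))
    have hQd0 := hrpow.mul hB
    rw [hQ]
    refine hQd0.congr_deriv (Eq.symm ?_)
    have hupow : u ^ (ν+1) = u ^ ν * u := by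
      rw [Real.rpow_add hu, Real.rpow_one]
    have hode := ode hν u
    have key : 2*u + (ν+1)*(-2*(b-u) - 2) + ((b-u)^2 + 2*(b-u)) = (b - u - (ν+1))^2 := by
      rw [hb]; ring
    simp only [hψ, hΨ1]
    rw [hupow]
    linear_combination (-(u ^ ν * ((b-u)^2 + 2*(b-u)))) * hode
      + (-(u ^ ν * G ν u)) * key
  have hcψ : Continuous ψ := by
    rw [hψ]
    exact ((continuous_const.sub continuous_id).pow 2).add
      (continuous_const.mul (continuous_const.sub continuous_id))
  have hcΨ1 : Continuous Ψ1 := by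
    rw [hΨ1]
    exact (continuous_const.mul (continuous_const.sub continuous_id)).sub continuous_const
  have hcQ : Continuous Q := by
    rw [hQ]
    exact (Real.continuous_rpow_const (by linarith)).mul
      ((hcψ.mul (continuous_G1 hν)).sub ((continuous_G hν).mul hcΨ1))
  set m : ℝ := b - (ν+1) with hm
  have hmpos : 0 < m := by rw [hm, hb]; nlinarith
  have hmb : m < b := by rw [hm]; linarith
  have hanti1 : StrictAntiOn Q (Icc 0 m) := by
    apply strictAntiOn_of_deriv_neg (convex_Icc 0 m) hcQ.continuousOn
    intro x hx
    rw [interior_Icc] at hx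
    rw [(hQd x hx.1).deriv]
    have hGx : 0 < G ν x := hpos x hx.1 (lt_trans hx.2 hmb)
    have hfac : 0 < (b - x - (ν+1))^2 := by
      apply pow_pos
      rw [hm] at hx
      linarith [hx.2]
    have h1 : 0 < x ^ ν := Real.rpow_pos_of_pos hx.1 ν
    have := mul_pos (mul_pos h1 hGx) hfac
    linarith
  have hanti2 : AntitoneOn Q (Icc m b) := by
    apply antitoneOn_of_deriv_nonpos (convex_Icc m b) hcQ.continuousOn
    · intro x hx
      rw [interior_Icc] at hx
      exact ((hQd x (lt_trans hmpos hx.1)).differentiableAt).differentiableWithinAt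
    intro x hx
    rw [interior_Icc] at hx
    rw [(hQd x (lt_trans hmpos hx.1)).deriv]
    have hGx : 0 < G ν x := hpos x (lt_trans hmpos hx.1) hx.2
    have h1 : 0 < x ^ ν := Real.rpow_pos_of_pos (lt_trans hmpos hx.1) ν
    have h2 : (0:ℝ) ≤ x ^ ν * G ν x * (b - x - (ν+1))^2 := by positivity
    linarith
  have hQ0 : Q 0 = 0 := by
    simp only [hQ]
    rw [Real.zero_rpow (by positivity : ν + 1 ≠ 0), zero_mul]
  have hQm_neg : Q m < 0 := by
    have := hanti1 (left_mem_Icc.mpr hmpos.le) (right_mem_Icc.mpr hmpos.le) hmpos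
    rw [hQ0] at this
    exact this
  have hQb_le : Q b ≤ Q m :=
    hanti2 (left_mem_Icc.mpr hmb.le) (right_mem_Icc.mpr hmb.le) hmb.le
  have hQb : 0 ≤ Q b := by
    simp only [hQ, hψ, hΨ1]
    rw [show b - b = (0:ℝ) by ring]
    have e1 : ((0:ℝ)^2 + 2*0) = 0 := by norm_num
    rw [e1, zero_mul, show (-2*(0:ℝ) - 2) = -2 by norm_num]
    have : b ^ (ν+1) * (0 - G ν b * (-2)) = 2 * (b ^ (ν+1) * G ν b) := by ring
    rw [this]
    have := Real.rpow_nonneg hbpos.le (ν+1)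
    positivity
  linarith

theorem stmt16' (ν : ℝ) (hν : 0 < ν) :
    Real.sqrt ((ν + 1) * (ν + 5)) < besselZero ν ∧
    besselZero ν < Real.sqrt (2 * (ν + 1) * (ν + 3)) := by
  set S : Set ℝ := {x : ℝ | 0 < x ∧ besselJ ν x = 0} with hS
  have hbz : besselZero ν = sInf S := rfl
  have hbdd : BddBelow S := ⟨0, fun x hx => hx.1.le⟩
  -- upper bound
  obtain ⟨z, hz0, hzb, hzG⟩ := exists_zero_upper hν
  have hsz : 0 < Real.sqrt z := Real.sqrt_pos.mpr hz0
  set x₀ : ℝ := 2 * Real.sqrt z with hx₀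
  have hx₀pos : 0 < x₀ := by rw [hx₀]; positivity
  have hx₀sq : x₀ ^ 2 / 4 = z := by
    rw [hx₀, mul_pow, Real.sq_sqrt hz0.le]
    ring
  have hJ : besselJ ν x₀ = 0 := by
    rw [besselJ_eq hν hx₀pos, hx₀sq, hzG, mul_zero]
  have hx₀S : x₀ ∈ S := ⟨hx₀pos, hJ⟩
  have h1 : besselZero ν ≤ x₀ := by rw [hbz]; exact csInf_le hbdd hx₀S
  have hsqrt4 : Real.sqrt 4 = 2 := by
    rw [show (4:ℝ) = 2^2 by norm_num, Real.sqrt_sq (by norm_num : (0:ℝ) ≤ 2)]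
  have hx₀B : x₀ < Real.sqrt (2 * (ν+1) * (ν+3)) := by
    have e1 : x₀ = Real.sqrt (4 * z) := by
      rw [Real.sqrt_mul (by norm_num : (0:ℝ) ≤ 4), hsqrt4, hx₀]
    rw [e1]
    apply Real.sqrt_lt_sqrt (by positivity)
    linarith
  -- lower bound
  set a₀ : ℝ := (ν+1)*(ν+5)/4 with ha₀
  have hGa₀ : 0 < G ν a₀ := G_pos_lower hν a₀ (by rw [ha₀]; positivity) le_rfl
  have hev : ∀ᶠ u in 𝓝 a₀, 0 < G ν u :=
    ((continuous_G hν).continuousAt).eventually (eventually_gt_nhds hGa₀)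
  obtain ⟨ε, hε, hball⟩ := Metric.eventually_nhds_iff.mp hev
  set a₁ : ℝ := a₀ + ε/2 with ha₁
  have hGpos' : ∀ u, 0 ≤ u → u ≤ a₁ → 0 < G ν u := by
    intro u hu0 hu1
    rcases le_or_gt u a₀ with h | h
    · exact G_pos_lower hν u hu0 h
    · apply hball
      rw [Real.dist_eq, abs_of_pos (by linarith)]
      rw [ha₁] at hu1
      linarith
  have hSlb : ∀ x ∈ S, Real.sqrt (4 * a₁) ≤ x := by
    intro x hx
    have hxpos : 0 < x := hx.1
    have hGx : G ν (x ^ 2 / 4) = 0 := by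
      have hbj : besselJ ν x = 0 := hx.2
      rw [besselJ_eq hν hxpos] at hbj
      rcases mul_eq_zero.mp hbj with h | h
      · exact absurd h (Real.rpow_pos_of_pos (by linarith) ν).ne'
      · exact h
    have hgt : a₁ < x ^ 2 / 4 := by
      by_contra hle
      push_neg at hle
      exact (hGpos' (x ^ 2 / 4) (by positivity) hle).ne' hGx
    have h5 : 4 * a₁ ≤ x ^ 2 := by
      have h6 := hgt
      rw [ha₁, ha₀] at h6 ⊢
      linarith
    have h4 : Real.sqrt (4 * a₁) ≤ Real.sqrt (x ^ 2) := Real.sqrt_le_sqrt h5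
    rwa [Real.sqrt_sq hxpos.le] at h4
  have h2 : Real.sqrt (4 * a₁) ≤ besselZero ν := by
    rw [hbz]
    exact le_csInf ⟨x₀, hx₀S⟩ hSlb
  have h3 : Real.sqrt ((ν+1)*(ν+5)) < Real.sqrt (4 * a₁) := by
    apply Real.sqrt_lt_sqrt (by positivity)
    rw [ha₁, ha₀]
    linarith
  exact ⟨lt_of_lt_of_le h3 h2, lt_of_le_of_lt h1 hx₀B⟩

end Stmt16Aux

/-- Bounds for the first positive zero of the Bessel function:
`√((ν+1)(ν+5)) < j_{ν,1} < √(2(ν+1)(ν+3))`. -/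
theorem stmt16 (ν : ℝ) (hν : 0 < ν) :
    Real.sqrt ((ν + 1) * (ν + 5)) < besselZero ν ∧
    besselZero ν < Real.sqrt (2 * (ν + 1) * (ν + 3)) := by
  exact Stmt16Aux.stmt16' ν hν

end
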